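/- For integers n ≥ 4 and 2 ≤ s ≤ n-1, IR(sP_n, 2K_2) ≤ sn + s + 1. -/

import Mathlib

open SimpleGraph

/-- The disjoint union of `s` copies of the graph `G`. -/
def SimpleGraph.Copies {β : Type*} (s : ℕ) (G : SimpleGraph β) :
    SimpleGraph (Fin s × β) where
  Adj x y := x.1 = y.1 ∧ G.Adj x.2 y.2
  symm := ⟨fun x y h => ⟨h.1.symm, h.2.symm⟩⟩
  loopless := ⟨fun x h => G.loopless.1 x.2 h.2⟩

/-- `F` strongly arrows `(G, H)`: every red-blue (`true`/`false`) colouring of the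
edges of `F` yields a red induced copy of `G` or a blue induced copy of `H`. -/
def StronglyArrows {α β γ : Type*}
    (F : SimpleGraph α) (G : SimpleGraph β) (H : SimpleGraph γ) : Prop :=
  ∀ c : Sym2 α → Bool,
    (∃ f : G ↪g F, ∀ a b : β, G.Adj a b → c s(f a, f b) = true) ∨
    (∃ f : H ↪g F, ∀ a b : γ, H.Adj a b → c s(f a, f b) = false)

/-- The induced Ramsey number `IR(G, H)`. -/
noncomputable def IR {β γ : Type*} (G : SimpleGraph β) (H : SimpleGraph γ) : ℕ :=
  sInf {n : ℕ | ∃ F : SimpleGraph (Fin n), StronglyArrows F G H}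

/-- The single-edge graph `K_2`. -/
def K2 : SimpleGraph (Fin 2) := ⊤

/-- Two disjoint edges `2K_2`. -/
def twoK2 : SimpleGraph (Fin 2 × Fin 2) := SimpleGraph.Copies 2 K2

/-!
The host graph is the cycle on `ZMod N`, `N = sn + s + 1`, whose edges are `{e, e + 1}`.
Two blue edges `{a, a + 1}`, `{b, b + 1}` with `b - a ∉ {-2, …, 2}` induce a blue `2K_2`.
Otherwise all blue edges start in a window `{v, v + 1, v + 2}`, so the path `v + 3, …, v + N`
is red; it is induced and has `N - 2 = sn + s - 1` vertices, and `sP_n` sits in it as an induced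
subgraph by leaving one vertex between consecutive copies.
-/

section Arrows

variable {α α' β β' γ : Type*} {F : SimpleGraph α} {F' : SimpleGraph α'} {G : SimpleGraph β}
  {G' : SimpleGraph β'} {H : SimpleGraph γ}

theorem StronglyArrows.mono (h : StronglyArrows F G H) (hF : F ↪g F') (hG : G' ↪g G) :
    StronglyArrows F' G' H := by
  intro c
  rcases h (c ∘ Sym2.map hF) with ⟨f, hf⟩ | ⟨f, hf⟩
  · exact Or.inl ⟨hF.comp (f.comp hG), fun a b hab => hf _ _ (hG.map_adj_iff.2 hab)⟩
  · exact Or.inr ⟨hF.comp f, hf⟩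

theorem IR_le_card [Fintype α] (h : StronglyArrows F G H) : IR G H ≤ Fintype.card α :=
  Nat.sInf_le ⟨_, h.mono (Embedding.map (Fintype.equivFin α).toEmbedding F) (Embedding.refl)⟩

end Arrows

theorem Nat.add_mul_eq_add_mul_iff {k a b i j : ℕ} (ha : a < k) (hb : b < k) :
    a + k * i = b + k * j ↔ a = b ∧ i = j := by
  refine ⟨fun h => ?_, by rintro ⟨rfl, rfl⟩; rfl⟩
  obtain ⟨h₁, h₂⟩ := (Nat.div_mod_unique (by omega)).2 ⟨h, ha⟩
  obtain ⟨h₃, h₄⟩ := (Nat.div_mod_unique (by omega)).2 ⟨rfl, hb⟩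
  exact ⟨h₂.symm.trans h₄, h₁.symm.trans h₃⟩

def copiesPathGraphEmbedding (s n m : ℕ) (h : s * (n + 1) ≤ m + 1) :
    Copies s (pathGraph n) ↪g pathGraph m where
  toFun p := ⟨p.2 + (n + 1) * p.1, by
    have hs := (Nat.mul_le_mul_left (n + 1) p.1.isLt).trans (h.trans_eq' (mul_comm _ _))
    rw [Nat.mul_succ] at hs
    omega⟩
  inj' p q h := by
    obtain ⟨h₂, h₁⟩ := (Nat.add_mul_eq_add_mul_iff (k := n + 1) (by omega) (by omega)).1
      (Fin.val_eq_of_eq h)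
    exact Prod.ext (Fin.ext h₁) (Fin.ext h₂)
  map_rel_iff' {p q} := by
    have succ_iff (p q : Fin s × Fin n) :
        p.2 + (n + 1) * p.1 + 1 = q.2 + (n + 1) * q.1 ↔ p.2.val + 1 = q.2 ∧ p.1 = q.1 := by
      rw [add_right_comm, Nat.add_mul_eq_add_mul_iff (by omega) (by omega), Fin.val_inj]
    change (pathGraph m).Adj ⟨p.2 + (n + 1) * p.1, _⟩ ⟨q.2 + (n + 1) * q.1, _⟩ ↔
      p.1 = q.1 ∧ (pathGraph n).Adj p.2 q.2
    rw [pathGraph_adj, pathGraph_adj, succ_iff, succ_iff]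
    grind

theorem circulantGraph_one_adj {R : Type*} [Ring R] [Nontrivial R] {u v : R} :
    (circulantGraph ({1} : Set R)).Adj u v ↔ u = v + 1 ∨ v = u + 1 := by
  simp only [circulantGraph_adj, Set.mem_singleton_iff, sub_eq_iff_eq_add']
  refine ⟨And.right, fun h => ⟨?_, by grind⟩⟩
  rintro rfl
  simp at h

theorem ZMod.natCast_eq_natCast_iff_of_lt {N a b : ℕ} (ha : a < N) (hb : b < N) :
    (a : ZMod N) = b ↔ a = b := by
  rw [ZMod.natCast_eq_natCast_iff', Nat.mod_eq_of_lt ha, Nat.mod_eq_of_lt hb]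

theorem ZMod.intCast_eq_intCast_iff_of_abs_sub_lt {N : ℕ} {x y : ℤ} (hxy : |x - y| < N) :
    (x : ZMod N) = y ↔ x = y := by
  refine ⟨fun h => ?_, congrArg _⟩
  rw [ZMod.intCast_eq_intCast_iff_dvd_sub] at h
  exact (sub_eq_zero.1 (Int.eq_zero_of_abs_lt_dvd h (by rwa [abs_sub_comm]))).symm

def pathGraphEmbeddingZMod {N m : ℕ} (hm : m < N) (a : ZMod N) :
    pathGraph m ↪g circulantGraph ({1} : Set (ZMod N)) where
  toFun i := a + (i.val : ZMod N)
  inj' i j h := Fin.ext ((ZMod.natCast_eq_natCast_iff_of_lt (by omega) (by omega)).1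
    (add_left_cancel h))
  map_rel_iff' {i j} := by
    have : Nontrivial (ZMod N) := ZMod.nontrivial_iff.2 (by have := i.isLt; omega)
    change (circulantGraph {1}).Adj (a + (i.val : ZMod N)) (a + j.val) ↔ _
    rw [circulantGraph_one_adj, pathGraph_adj, add_assoc, add_assoc, add_right_inj, add_right_inj,
      ← Nat.cast_add_one, ← Nat.cast_add_one,
      ZMod.natCast_eq_natCast_iff_of_lt (by omega) (by omega),
      ZMod.natCast_eq_natCast_iff_of_lt (by omega) (by omega)]
    omega

theorem exists_twoK2_embedding_circulantGraph_one {R : Type*} [CommRing R] {a b : R}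
    (hab : ∀ k : ℤ, |k| ≤ 2 → b ≠ a + k) :
    ∃ f : twoK2 ↪g circulantGraph ({1} : Set R),
      ∀ p q, twoK2.Adj p q → s(f p, f q) = s(a, a + 1) ∨ s(f p, f q) = s(b, b + 1) := by
  have : Nontrivial R := by
    by_contra h
    rw [not_nontrivial_iff_subsingleton] at h
    exact hab 0 (by norm_num) (Subsingleton.elim _ _)
  have h₀ := hab 0 (by norm_num)
  have h₁ := hab 1 (by norm_num)
  have h₂ := hab 2 (by norm_num)
  have h₃ := hab (-1) (by norm_num)
  have h₄ := hab (-2) (by norm_num)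
  push_cast at h₀ h₁ h₂ h₃ h₄
  let f : Fin 2 × Fin 2 → R := fun p => ![a, b] p.1 + (p.2.val : R)
  have hf : ∀ p q, (circulantGraph ({1} : Set R)).Adj (f p) (f q) ↔ twoK2.Adj p q := by
    intro p q
    rw [circulantGraph_one_adj]
    fin_cases p <;> fin_cases q <;> simp [f, twoK2, Copies, K2] <;> grind
  have hinj : Function.Injective f := by
    intro p q h
    fin_cases p <;> fin_cases q <;> simp [f] at h ⊢ <;> grind
  have hcol : ∀ p q, twoK2.Adj p q → s(f p, f q) = s(a, a + 1) ∨ s(f p, f q) = s(b, b + 1) := by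
    intro p q hpq
    fin_cases p <;> fin_cases q <;> simp [f, twoK2, Copies, K2] at hpq ⊢
  exact ⟨⟨⟨f, hinj⟩, hf _ _⟩, hcol⟩

theorem ZMod.exists_window_of_pairwise_near {N : ℕ} (hN : 7 ≤ N) {S : ZMod N → Prop}
    (hS : ∀ a b, S a → S b → ∃ k : ℤ, |k| ≤ 2 ∧ b = a + k) :
    ∃ v, ∀ x, S x → ∃ k : ℤ, 0 ≤ k ∧ k ≤ 2 ∧ x = v + k := by
  by_cases hne : ∃ e, S e
  swap
  · exact ⟨0, fun x hx => absurd ⟨x, hx⟩ hne⟩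
  obtain ⟨e, he⟩ := hne
  obtain ⟨j, ⟨hj, hSj⟩, hjmax⟩ := Int.exists_greatest_of_bdd (P := fun z => z ≤ 2 ∧ S (e + z))
    ⟨2, fun _ hz => hz.1⟩ ⟨0, by simpa using he⟩
  have hj₀ : 0 ≤ j := hjmax 0 ⟨by norm_num, by simpa using he⟩
  refine ⟨e + j - 2, fun x hx => ?_⟩
  obtain ⟨k₁, hk₁, rfl⟩ := hS e x he hx
  obtain ⟨k₂, hk₂, hk₁₂⟩ := hS _ _ hSj hx
  rw [abs_le] at hk₁ hk₂
  have hk₁j : k₁ ≤ j := hjmax k₁ ⟨hk₁.2, hx⟩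
  have hk : k₁ = j + k₂ := by
    refine (ZMod.intCast_eq_intCast_iff_of_abs_sub_lt (N := N) (by rw [abs_lt]; omega)).1 ?_
    push_cast
    linear_combination hk₁₂
  exact ⟨k₁ - j + 2, by omega, by omega, by push_cast; ring⟩

theorem stronglyArrows_circulantGraph_one_pathGraph_twoK2 {m : ℕ} (hm : 5 ≤ m) :
    StronglyArrows (circulantGraph ({1} : Set (ZMod (m + 2)))) (pathGraph m) twoK2 := by
  intro c
  by_cases hfar : ∃ a b, c s(a, a + 1) = false ∧ c s(b, b + 1) = false ∧
      ∀ k : ℤ, |k| ≤ 2 → b ≠ a + k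
  · obtain ⟨a, b, ha, hb, hab⟩ := hfar
    obtain ⟨f, hf⟩ := exists_twoK2_embedding_circulantGraph_one hab
    exact Or.inr ⟨f, fun p q hpq => by rcases hf p q hpq with h | h <;> rwa [h]⟩
  push Not at hfar
  obtain ⟨v, hv⟩ := ZMod.exists_window_of_pairwise_near (S := fun e => c s(e, e + 1) = false)
    (by omega) hfar
  have hred (t : ℕ) (ht : t + 2 ≤ m) : c s(v + 3 + t, v + 3 + t + 1) = true := by
    by_contra hblue
    obtain ⟨k, hk₀, hk₂, hk⟩ := hv _ (Bool.not_eq_true _ ▸ hblue)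
    have : ((3 + t : ℤ) : ZMod (m + 2)) = k := by
      push_cast
      linear_combination hk
    have := (ZMod.intCast_eq_intCast_iff_of_abs_sub_lt (by rw [abs_lt]; omega)).1 this
    omega
  refine Or.inl ⟨pathGraphEmbeddingZMod (by omega) (v + 3), fun i j hij => ?_⟩
  change c s(v + 3 + (i.val : ZMod (m + 2)), v + 3 + (j.val : ZMod (m + 2))) = true
  rcases pathGraph_adj.1 hij with h | h
  · rw [← h, Nat.cast_add_one, ← add_assoc]
    exact hred i (by omega)
  · rw [← h, Nat.cast_add_one, ← add_assoc, Sym2.eq_swap]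
    exact hred j (by omega)

theorem stmt8_general (n s : ℕ) (hn : 4 ≤ n) (hs1 : 2 ≤ s) :
    IR (SimpleGraph.Copies s (SimpleGraph.pathGraph n)) twoK2 ≤ s * n + s + 1 := by
  obtain ⟨m, hm⟩ : ∃ m, s * n + s + 1 = m + 2 := ⟨s * n + s - 1, by omega⟩
  have hm₅ : 5 ≤ m := by nlinarith
  calc IR _ _ ≤ Fintype.card (ZMod (m + 2)) := IR_le_card
        ((stronglyArrows_circulantGraph_one_pathGraph_twoK2 hm₅).mono Embedding.refl
          (copiesPathGraphEmbedding s n m (by rw [mul_add_one]; omega)))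
    _ = s * n + s + 1 := by rw [ZMod.card, hm]

theorem stmt8 (n s : ℕ) (hn : 4 ≤ n) (hs1 : 2 ≤ s) (hs2 : s ≤ n - 1) :
    IR (SimpleGraph.Copies s (SimpleGraph.pathGraph n)) twoK2 ≤ s * n + s + 1 :=
  stmt8_general n s hn hs1
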